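/- arXiv:2501.19148 — 2 statements merged into one kernel-verified Lean document; each statement's English description precedes it below -/
import Mathlib

section
/- Let (C, d) be a finite metric space, k ≥ 1, ℓ ≤ |C|, and let OPT = min_{|T|≤k} Top_ℓ(d(C,T)). Suppose S ⊆ C satisfies Top_ℓ(d(C,S)) ≤ α·OPT. Form the weighted instance where each point j ∈ C is moved to its nearest point of S (ties broken arbitrarily): each i ∈ S receives weight w_i equal to the number of points of C assigned to it. Let OPT' be the optimal ℓ-centrum value of this weighted instance (where a point of weight w counts as w co-located agents). Then OPT' ≤ 2(α + 1)·OPT. -/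
open Finset

/-- `Topl ℓ v` : the sum of the `ℓ` largest entries of `v`, expressed as the
maximum subset-sum over subsets of cardinality `ℓ` (these agree for `ℓ ≤ n`). -/
noncomputable def Topl {ι : Type*} [Fintype ι] (ℓ : ℕ) (v : ι → ℝ) : ℝ :=
  sSup {x : ℝ | ∃ S : Finset ι, S.card = ℓ ∧ x = ∑ i ∈ S, v i}

/- Moving every agent to its nearest point of `S` costs, by the triangle inequality, at most
`d(j, S)` per agent, so for any `T` the moved instance pays at most `d(j,S) + d(j,T)` at `j`.
As `Top_ℓ` is subadditive, taking the infimum over `T` gives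
`OPT' ≤ Top_ℓ(d(C,S)) + OPT ≤ (α + 1) OPT`, and everything is nonnegative. -/

section Topl

variable {ι : Type*} [Fintype ι] {ℓ : ℕ}

lemma Topl_nonneg {v : ι → ℝ} (hv : ∀ i, 0 ≤ v i) : 0 ≤ Topl ℓ v :=
  Real.sSup_nonneg <| by
    rintro _ ⟨s, -, rfl⟩
    exact sum_nonneg fun i _ => hv i

lemma sum_le_Topl (v : ι → ℝ) {s : Finset ι} (hs : s.card = ℓ) :
    ∑ i ∈ s, v i ≤ Topl ℓ v := by
  have hfin : {x : ℝ | ∃ s : Finset ι, s.card = ℓ ∧ x = ∑ i ∈ s, v i}.Finite :=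
    (Set.finite_range fun s : Finset ι => ∑ i ∈ s, v i).subset
      (by rintro _ ⟨s, -, rfl⟩; exact ⟨s, rfl⟩)
  exact le_csSup hfin.bddAbove ⟨s, hs, rfl⟩

lemma Topl_le_add {w u v : ι → ℝ} (h : ∀ i, w i ≤ u i + v i)
    (hu : ∀ i, 0 ≤ u i) (hv : ∀ i, 0 ≤ v i) :
    Topl ℓ w ≤ Topl ℓ u + Topl ℓ v := by
  refine Real.sSup_le ?_ (add_nonneg (Topl_nonneg hu) (Topl_nonneg hv))
  rintro _ ⟨s, hs, rfl⟩
  calc ∑ i ∈ s, w i ≤ ∑ i ∈ s, (u i + v i) := sum_le_sum fun i _ => h i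
    _ = ∑ i ∈ s, u i + ∑ i ∈ s, v i := sum_add_distrib
    _ ≤ Topl ℓ u + Topl ℓ v := add_le_add (sum_le_Topl u hs) (sum_le_Topl v hs)

end Topl

lemma Finset.inf'_dist_le_dist_add_inf'_dist {X : Type*} [PseudoMetricSpace X] {T : Finset X}
    (hT : T.Nonempty) (x y : X) :
    T.inf' hT (fun a => dist y a) ≤ dist y x + T.inf' hT (fun a => dist x a) := by
  obtain ⟨a, haT, ha⟩ := exists_mem_eq_inf' hT (fun a => dist x a)
  calc T.inf' hT (fun a => dist y a) ≤ dist y a := inf'_le _ haT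
    _ ≤ dist y x + dist x a := dist_triangle _ _ _
    _ = dist y x + T.inf' hT (fun a => dist x a) := by rw [ha]

theorem stmt6_general {C : Type*} [Fintype C] [MetricSpace C] (k ℓ : ℕ)
    (hk : 1 ≤ k) (α : ℝ)
    (S : Finset C) (hS : S.Nonempty)
    -- σ assigns each point to a nearest point of S (ties broken arbitrarily)
    (σ : C → C)
    (hσnear : ∀ j, dist j (σ j) = S.inf' hS (fun a => dist j a))
    (OPT : ℝ)
    (hOPT : OPT = sInf {x : ℝ | ∃ (T : Finset C) (hT : T.Nonempty),
      T.card ≤ k ∧ x = Topl ℓ (fun j => T.inf' hT (fun a => dist j a))})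
    -- S is an α-approximate ℓ-centrum solution
    (hScost : Topl ℓ (fun j => S.inf' hS (fun a => dist j a)) ≤ α * OPT)
    -- OPT' : optimal ℓ-centrum value of the weighted instance (each agent j moved to σ j)
    (OPT' : ℝ)
    (hOPT' : OPT' = sInf {x : ℝ | ∃ (T : Finset C) (hT : T.Nonempty),
      T.card ≤ k ∧ x = Topl ℓ (fun j => T.inf' hT (fun a => dist (σ j) a))}) :
    OPT' ≤ 2 * (α + 1) * OPT := by
  have hdist_nonneg (T : Finset C) (hT : T.Nonempty) (f : C → C) (j : C) :
      0 ≤ T.inf' hT (fun a => dist (f j) a) := le_inf' hT _ fun _ _ => dist_nonneg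
  have hmoved (T : Finset C) (hT : T.Nonempty) (hTk : T.card ≤ k) :
      OPT' ≤ α * OPT + Topl ℓ (fun j => T.inf' hT (fun a => dist j a)) :=
    calc OPT' ≤ Topl ℓ (fun j => T.inf' hT (fun a => dist (σ j) a)) := by
          rw [hOPT']
          refine csInf_le ⟨0, ?_⟩ ⟨T, hT, hTk, rfl⟩
          rintro _ ⟨T, hT, -, rfl⟩
          exact Topl_nonneg (hdist_nonneg T hT σ)
      _ ≤ Topl ℓ (fun j => S.inf' hS (fun a => dist j a)) +
          Topl ℓ (fun j => T.inf' hT (fun a => dist j a)) :=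
        Topl_le_add (fun j => by
            simpa only [dist_comm (σ j) j, hσnear] using
              inf'_dist_le_dist_add_inf'_dist hT j (σ j))
          (hdist_nonneg S hS id) (hdist_nonneg T hT id)
      _ ≤ α * OPT + Topl ℓ (fun j => T.inf' hT (fun a => dist j a)) := by gcongr
  obtain ⟨c, -⟩ := id hS
  have hOPT_lower : OPT' - α * OPT ≤ OPT := by
    conv_rhs => rw [hOPT]
    refine le_csInf ⟨_, {c}, singleton_nonempty c, by simpa using hk, rfl⟩ ?_
    rintro _ ⟨T, hT, hTk, rfl⟩
    linarith [hmoved T hT hTk]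
  have hOPT_nonneg : 0 ≤ OPT := by
    rw [hOPT]
    refine Real.sInf_nonneg ?_
    rintro _ ⟨T, hT, -, rfl⟩
    exact Topl_nonneg (hdist_nonneg T hT id)
  have hαOPT_nonneg : 0 ≤ α * OPT := (Topl_nonneg (hdist_nonneg S hS id)).trans hScost
  linarith

theorem stmt6 {C : Type*} [Fintype C] [MetricSpace C] (k ℓ : ℕ)
    (hk : 1 ≤ k) (hℓ1 : 1 ≤ ℓ) (hℓ : ℓ ≤ Fintype.card C) (α : ℝ)
    (S : Finset C) (hS : S.Nonempty)
    -- σ assigns each point to a nearest point of S (ties broken arbitrarily)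
    (σ : C → C) (hσmem : ∀ j, σ j ∈ S)
    (hσnear : ∀ j, dist j (σ j) = S.inf' hS (fun a => dist j a))
    (OPT : ℝ)
    (hOPT : OPT = sInf {x : ℝ | ∃ (T : Finset C) (hT : T.Nonempty),
      T.card ≤ k ∧ x = Topl ℓ (fun j => T.inf' hT (fun a => dist j a))})
    -- S is an α-approximate ℓ-centrum solution
    (hScost : Topl ℓ (fun j => S.inf' hS (fun a => dist j a)) ≤ α * OPT)
    -- OPT' : optimal ℓ-centrum value of the weighted instance (each agent j moved to σ j)
    (OPT' : ℝ)
    (hOPT' : OPT' = sInf {x : ℝ | ∃ (T : Finset C) (hT : T.Nonempty),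
      T.card ≤ k ∧ x = Topl ℓ (fun j => T.inf' hT (fun a => dist (σ j) a))}) :
    OPT' ≤ 2 * (α + 1) * OPT :=
  stmt6_general k ℓ hk α S hS σ hσnear OPT hOPT hScost OPT' hOPT'
end

section
/- Let (C,d) be a finite metric space with clusters C*_1,…,C*_k partitioning C, centers c*_q, and current center set S. Fix t_ℓ with t*_ℓ ≤ t_ℓ ≤ max{(1+ε)t*_ℓ, ε·OPT/ℓ}, where t*_ℓ is the ℓ-th largest value of d(j,S*) over j ∈ C and OPT = Top_ℓ(d(C,S*)). Suppose every cluster C*_q is ℓ-good, i.e., ∑_{j∈C*_q}(d(j,S) − 2t_ℓ)^+ ≤ γ·∑_{j∈C*_q}(d(j,c*_q) − t_ℓ)^+ with γ ≥ 2. Then Top_ℓ(d(C,S)) ≤ (1+ε)·γ·Top_ℓ(d(C,S*)). -/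
open Finset

/-- `nthLargest ℓ v` : the `ℓ`-th largest coordinate of `v` (1-indexed). -/
noncomputable def nthLargest {ι : Type*} [Fintype ι] (ℓ : ℕ) (v : ι → ℝ) : ℝ :=
  sSup {t : ℝ | ℓ ≤ {i | t ≤ v i}.ncard}

section Topl

variable {ι : Type*} [Fintype ι] (ℓ : ℕ) (v : ι → ℝ)

lemma bddAbove_topl_set : BddAbove {x : ℝ | ∃ S : Finset ι, S.card = ℓ ∧ x = ∑ i ∈ S, v i} :=
  ((Set.finite_range fun S : Finset ι => ∑ i ∈ S, v i).subset
    (by rintro x ⟨T, -, rfl⟩; exact ⟨T, rfl⟩)).bddAbove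

lemma sum_le_topl {T : Finset ι} (hT : T.card = ℓ) : ∑ i ∈ T, v i ≤ Topl ℓ v :=
  le_csSup (bddAbove_topl_set ℓ v) ⟨T, hT, rfl⟩

lemma topl_le {B : ℝ} (hℓ : ℓ ≤ Fintype.card ι)
    (h : ∀ T : Finset ι, T.card = ℓ → ∑ i ∈ T, v i ≤ B) : Topl ℓ v ≤ B := by
  obtain ⟨T, -, hT⟩ := exists_subset_card_eq (s := (univ : Finset ι)) (by simpa using hℓ)
  exact csSup_le ⟨_, T, hT, rfl⟩ (by rintro x ⟨U, hU, rfl⟩; exact h U hU)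

lemma topl_le_mul_add_sum_max (hℓ : ℓ ≤ Fintype.card ι) (ρ : ℝ) :
    Topl ℓ v ≤ ℓ * ρ + ∑ i, max (v i - ρ) 0 :=
  topl_le ℓ v hℓ fun T hT => calc
    ∑ i ∈ T, v i ≤ ∑ i ∈ T, (ρ + max (v i - ρ) 0) :=
      sum_le_sum fun i _ => by linarith [le_max_left (v i - ρ) 0]
    _ = ℓ * ρ + ∑ i ∈ T, max (v i - ρ) 0 := by
      rw [sum_add_distrib, sum_const, hT, nsmul_eq_mul]
    _ ≤ ℓ * ρ + ∑ i, max (v i - ρ) 0 :=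
      (add_le_add_iff_left _).2 (sum_le_univ_sum_of_nonneg fun i => le_max_right _ _)

end Topl

section nthLargest

variable {ι : Type*} [Fintype ι] {ℓ : ℕ} (v : ι → ℝ)

lemma ncard_setOf_le (t : ℝ) : {i | t ≤ v i}.ncard = #{i | t ≤ v i} := by
  rw [← Set.ncard_coe_finset, coe_filter_univ]

lemma bddAbove_nthLargest_set (hℓ : 1 ≤ ℓ) : BddAbove {t : ℝ | ℓ ≤ {i | t ≤ v i}.ncard} := by
  obtain ⟨M, hM⟩ := (Set.finite_range v).bddAbove
  refine ⟨M, fun t ht => ?_⟩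
  obtain ⟨i, hi⟩ := Set.nonempty_of_ncard_ne_zero (s := {i | t ≤ v i}) (by simp at ht; omega)
  exact hi.trans (hM ⟨i, rfl⟩)

lemma le_nthLargest (hℓ : 1 ≤ ℓ) {t : ℝ} (ht : ℓ ≤ #{i | t ≤ v i}) : t ≤ nthLargest ℓ v :=
  le_csSup (bddAbove_nthLargest_set v hℓ) (by rwa [Set.mem_ofPred_eq, ncard_setOf_le])

lemma le_nthLargest_of_forall_le (hℓ1 : 1 ≤ ℓ) (hℓn : ℓ ≤ Fintype.card ι) {t : ℝ}
    (ht : ∀ i, t ≤ v i) : t ≤ nthLargest ℓ v :=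
  le_nthLargest v hℓ1 (by rwa [filter_true_of_mem fun i _ => ht i, card_univ])

lemma card_nthLargest_lt_lt (hℓ : 1 ≤ ℓ) : #{i | nthLargest ℓ v < v i} < ℓ := by
  by_contra! h
  obtain ⟨i₀, hi₀, hmin⟩ := exists_min_image {i | nthLargest ℓ v < v i} v (card_pos.1 (by omega))
  have : v i₀ ≤ nthLargest ℓ v :=
    le_nthLargest v hℓ (h.trans (card_le_card fun i hi => mem_filter.2 ⟨mem_univ i, hmin i hi⟩))
  linarith [(mem_filter.1 hi₀).2]

lemma le_card_nthLargest_le (hℓn : ℓ ≤ Fintype.card ι) :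
    ℓ ≤ #{i | nthLargest ℓ v ≤ v i} := by
  set t := nthLargest ℓ v
  by_contra! h
  obtain ⟨i₁, hi₁⟩ : ∃ i, v i < t := by
    by_contra! hall
    rw [filter_true_of_mem fun i _ => hall i, card_univ] at h
    omega
  obtain ⟨i₀, hi₀, hmax⟩ := exists_max_image {i | v i < t} v ⟨i₁, by simpa using hi₁⟩
  -- a level above the largest value below `t` is met by no more coordinates than `t` itself
  have : t ≤ v i₀ := by
    obtain ⟨m, hm⟩ := (Set.finite_range v).bddBelow
    refine csSup_le ⟨m, ?_⟩ fun u hu => ?_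
    · rw [Set.mem_ofPred_eq, ncard_setOf_le, filter_true_of_mem fun i _ => hm ⟨i, rfl⟩, card_univ]
      exact hℓn
    · by_contra! hu'
      have : #{i | u ≤ v i} ≤ #{i | t ≤ v i} := card_le_card fun i hi => by
        simp only [mem_filter, mem_univ, true_and] at hi ⊢
        by_contra! hlt
        linarith [hmax i (by simpa using hlt)]
      rw [Set.mem_ofPred_eq, ncard_setOf_le] at hu
      omega
  linarith [(mem_filter.1 hi₀).2]

lemma exists_card_eq_nthLargest (hℓ1 : 1 ≤ ℓ) (hℓn : ℓ ≤ Fintype.card ι) :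
    ∃ T : Finset ι, T.card = ℓ ∧ (∀ i ∈ T, nthLargest ℓ v ≤ v i) ∧
      ∀ i ∉ T, v i ≤ nthLargest ℓ v := by
  obtain ⟨T, hgt, hge, hT⟩ := exists_subsuperset_card_eq
    (monotone_filter_right _ fun _ _ => le_of_lt) (card_nthLargest_lt_lt v hℓ1).le
    (le_card_nthLargest_le v hℓn)
  exact ⟨T, hT, fun i hi => (mem_filter.1 (hge hi)).2,
    fun i hi => not_lt.1 fun h => hi (hgt (by simpa using h))⟩

lemma mul_nthLargest_add_sum_max_le_topl (hℓ1 : 1 ≤ ℓ) (hℓn : ℓ ≤ Fintype.card ι) :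
    ℓ * nthLargest ℓ v + ∑ i, max (v i - nthLargest ℓ v) 0 ≤ Topl ℓ v := by
  obtain ⟨T, hT, hin, hout⟩ := exists_card_eq_nthLargest v hℓ1 hℓn
  have hexcess : ∑ i, max (v i - nthLargest ℓ v) 0 = ∑ i ∈ T, (v i - nthLargest ℓ v) := by
    rw [← sum_subset (subset_univ T) fun i _ hi => max_eq_right (by linarith [hout i hi])]
    exact sum_congr rfl fun i hi => max_eq_left (by linarith [hin i hi])
  calc _ = ∑ i ∈ T, v i := by rw [hexcess, sum_sub_distrib, sum_const, hT, nsmul_eq_mul]; ring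
    _ ≤ Topl ℓ v := sum_le_topl ℓ v hT

end nthLargest

lemma sum_eq_sum_sum_of_partition {ι κ M : Type*} [Fintype ι] [Fintype κ] [AddCommMonoid M]
    (cl : κ → Finset ι) (hpart : ∀ j, ∃ q, j ∈ cl q)
    (hdisj : ∀ q q', q ≠ q' → Disjoint (cl q) (cl q')) (f : ι → M) :
    ∑ j, f j = ∑ q, ∑ j ∈ cl q, f j := by
  classical
  rw [← sum_biUnion fun q _ q' _ h => hdisj q q' h]
  exact sum_congr (eq_univ_of_forall fun j => by simpa using hpart j).symm fun _ _ => rfl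

lemma two_mul_mul_add_mul_sub_le_of_le_max {L t tstar OPT ε γ : ℝ} (hL : 0 < L)
    (htstar : 0 ≤ tstar) (hε : 0 ≤ ε) (hγ : 2 ≤ γ) (hOPT : L * tstar ≤ OPT)
    (ht : t ≤ max ((1 + ε) * tstar) (ε * OPT / L)) :
    2 * L * t + γ * (OPT - L * tstar) ≤ (1 + ε) * γ * OPT := by
  have hOPT0 : 0 ≤ OPT := (mul_nonneg hL.le htstar).trans hOPT
  rcases le_max_iff.1 ht with h | h
  · have hLt : L * t ≤ L * ((1 + ε) * tstar) := mul_le_mul_of_nonneg_left h hL.le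
    nlinarith [mul_nonneg (mul_nonneg (by linarith : (0:ℝ) ≤ γ - 2) hε) hOPT0,
      mul_le_mul_of_nonneg_left hOPT hε,
      mul_nonneg (mul_nonneg (by linarith : (0:ℝ) ≤ γ - 2) hL.le) htstar]
  · have hLt : L * t ≤ ε * OPT := by rwa [le_div_iff₀ hL, mul_comm] at h
    nlinarith [mul_nonneg (mul_nonneg (by linarith : (0:ℝ) ≤ γ - 2) hε) hOPT0,
      mul_nonneg (by linarith : (0:ℝ) ≤ γ) (mul_nonneg hL.le htstar)]

theorem stmt10_general {C : Type*} [Fintype C] [MetricSpace C] (k ℓ : ℕ)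
    (hℓ1 : 1 ≤ ℓ) (hℓn : ℓ ≤ Fintype.card C)
    (Sstar : Finset C) (hSstar : Sstar.Nonempty)
    (S : Finset C) (hS : S.Nonempty)
    -- the clusters C*_1, ..., C*_k partition C, with centers c*_q ∈ S*
    (cl : Fin k → Finset C) (c : Fin k → C)
    (hpart : ∀ j : C, ∃ q, j ∈ cl q)
    (hdisj : ∀ q q', q ≠ q' → Disjoint (cl q) (cl q'))
    (hcnear : ∀ q, ∀ j ∈ cl q,
      Sstar.inf' hSstar (fun a => dist j a) = dist j (c q))
    (ε γ : ℝ) (hε : 0 ≤ ε) (hγ : 2 ≤ γ)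
    -- t*_ℓ is the ℓ-th largest value of d(j, S*), OPT = Top_ℓ(d(C, S*))
    (tstar OPT : ℝ)
    (htstar : tstar = nthLargest ℓ (fun j => Sstar.inf' hSstar (fun a => dist j a)))
    (hOPT : OPT = Topl ℓ (fun j => Sstar.inf' hSstar (fun a => dist j a)))
    (tℓ : ℝ) (htℓ1 : tstar ≤ tℓ)
    (htℓ2 : tℓ ≤ max ((1 + ε) * tstar) (ε * OPT / (ℓ : ℝ)))
    -- every cluster is ℓ-good
    (hgood : ∀ q, ∑ j ∈ cl q, max (S.inf' hS (fun a => dist j a) - 2 * tℓ) 0 ≤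
      γ * ∑ j ∈ cl q, max (dist j (c q) - tℓ) 0) :
    Topl ℓ (fun j => S.inf' hS (fun a => dist j a)) ≤
      (1 + ε) * γ * Topl ℓ (fun j => Sstar.inf' hSstar (fun a => dist j a)) := by
  set v : C → ℝ := fun j => Sstar.inf' hSstar (fun a => dist j a)
  set w : C → ℝ := fun j => S.inf' hS (fun a => dist j a)
  have hv0 : ∀ j, 0 ≤ v j := fun j => le_inf' hSstar _ fun a _ => dist_nonneg
  have htstar0 : 0 ≤ tstar := htstar ▸ le_nthLargest_of_forall_le v hℓ1 hℓn hv0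
  have hexcess_opt : ℓ * tstar + ∑ j, max (v j - tstar) 0 ≤ OPT := by
    rw [htstar, hOPT]
    exact mul_nthLargest_add_sum_max_le_topl v hℓ1 hℓn
  have hexcess : ∑ j, max (w j - 2 * tℓ) 0 ≤ γ * (OPT - ℓ * tstar) := calc
    ∑ j, max (w j - 2 * tℓ) 0 = ∑ q, ∑ j ∈ cl q, max (w j - 2 * tℓ) 0 :=
      sum_eq_sum_sum_of_partition cl hpart hdisj _
    _ ≤ ∑ q, γ * ∑ j ∈ cl q, max (v j - tℓ) 0 := sum_le_sum fun q _ =>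
      (hgood q).trans_eq <| by
        congr 1
        exact sum_congr rfl fun j hj => by simp only [v, hcnear q j hj]
    _ = γ * ∑ j, max (v j - tℓ) 0 := by
      rw [← mul_sum, sum_eq_sum_sum_of_partition cl hpart hdisj]
    _ ≤ γ * ∑ j, max (v j - tstar) 0 := by gcongr with j
    _ ≤ γ * (OPT - ℓ * tstar) := by gcongr; linarith
  rw [← hOPT]
  calc Topl ℓ w ≤ ℓ * (2 * tℓ) + ∑ j, max (w j - 2 * tℓ) 0 := topl_le_mul_add_sum_max ℓ w hℓn _
    _ ≤ 2 * ℓ * tℓ + γ * (OPT - ℓ * tstar) := by linarith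
    _ ≤ (1 + ε) * γ * OPT :=
      two_mul_mul_add_mul_sub_le_of_le_max (by exact_mod_cast hℓ1) htstar0 hε hγ
        (by linarith [sum_nonneg fun j (_ : j ∈ univ) => le_max_right (v j - tstar) 0]) htℓ2

theorem stmt10 {C : Type*} [Fintype C] [MetricSpace C] (k ℓ : ℕ)
    (hℓ1 : 1 ≤ ℓ) (hℓn : ℓ ≤ Fintype.card C)
    (Sstar : Finset C) (hSstar : Sstar.Nonempty)
    (S : Finset C) (hS : S.Nonempty)
    -- the clusters C*_1, ..., C*_k partition C, with centers c*_q ∈ S*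
    (cl : Fin k → Finset C) (c : Fin k → C)
    (hpart : ∀ j : C, ∃ q, j ∈ cl q)
    (hdisj : ∀ q q', q ≠ q' → Disjoint (cl q) (cl q'))
    (hcmem : ∀ q, c q ∈ Sstar)
    (hcnear : ∀ q, ∀ j ∈ cl q,
      Sstar.inf' hSstar (fun a => dist j a) = dist j (c q))
    (ε γ : ℝ) (hε : 0 ≤ ε) (hγ : 2 ≤ γ)
    -- t*_ℓ is the ℓ-th largest value of d(j, S*), OPT = Top_ℓ(d(C, S*))
    (tstar OPT : ℝ)
    (htstar : tstar = nthLargest ℓ (fun j => Sstar.inf' hSstar (fun a => dist j a)))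
    (hOPT : OPT = Topl ℓ (fun j => Sstar.inf' hSstar (fun a => dist j a)))
    (tℓ : ℝ) (htℓ1 : tstar ≤ tℓ)
    (htℓ2 : tℓ ≤ max ((1 + ε) * tstar) (ε * OPT / (ℓ : ℝ)))
    -- every cluster is ℓ-good
    (hgood : ∀ q, ∑ j ∈ cl q, max (S.inf' hS (fun a => dist j a) - 2 * tℓ) 0 ≤
      γ * ∑ j ∈ cl q, max (dist j (c q) - tℓ) 0) :
    Topl ℓ (fun j => S.inf' hS (fun a => dist j a)) ≤
      (1 + ε) * γ * Topl ℓ (fun j => Sstar.inf' hSstar (fun a => dist j a)) :=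
  stmt10_general k ℓ hℓ1 hℓn Sstar hSstar S hS cl c hpart hdisj hcnear ε γ hε hγ tstar OPT htstar
    hOPT tℓ htℓ1 htℓ2 hgood
end
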